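/- arXiv:0904.0022 — 2 statements merged into one kernel-verified Lean document; each statement's English description precedes it below -/
import Mathlib

section
/- Let a ∈ ℂ. The function θ ↦ |((1 + e^{iθ})/(1 − e^{iθ}))^a|², defined for θ ∈ (−π, π) \ {0} using the principal complex power, is Lebesgue integrable over (−π, π) if and only if |Re(a)| < 1/2. (This is the criterion for the eigenfunction f_a(z) = ((1+z)/(1−z))^a to belong to the Hardy space H².) -/
/-!
On the unit circle `(1 + e^{iθ}) / (1 - e^{iθ}) = i cot(θ/2)`, and for `w ≠ 0` the modulus
`|w^b| = |w|^{Re b} e^{-arg w · Im b}` differs from `|w|^{Re b}` by a factor between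
`e^{∓π |Im b|}`. Since `|w^a|² = |w^{2a}|`, the integrand is comparable to `|cot(θ/2)|^{2 Re a}`.
This function is even, and `θ ↦ π - θ` turns `|cot(θ/2)|^p` into `|cot(θ/2)|^{-p}`, so everything
reduces to `(0, π/2)`, where `cot(θ/2)` is comparable to `1/θ` and `θ^{-p}` is integrable iff
`p < 1`. Both `2 Re a < 1` and `-2 Re a < 1` are needed: this is `|Re a| < 1/2`.
-/

open MeasureTheory Set Real

section Comparison

variable {α : Type*} [MeasurableSpace α] {μ : Measure α} {s : Set α}

theorem integrableOn_iff_of_le_mul_of_le_mul {f g : α → ℝ}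
    (hf : AEStronglyMeasurable f (μ.restrict s)) (hg : AEStronglyMeasurable g (μ.restrict s))
    {m M : ℝ} (hm : 0 < m) (hg₀ : ∀ᵐ x ∂μ.restrict s, 0 ≤ g x)
    (hlow : ∀ᵐ x ∂μ.restrict s, m * g x ≤ f x) (hup : ∀ᵐ x ∂μ.restrict s, f x ≤ M * g x) :
    IntegrableOn f s μ ↔ IntegrableOn g s μ := by
  refine ⟨fun hfi => (hfi.const_mul m⁻¹).mono' hg ?_, fun hgi => (hgi.const_mul M).mono' hf ?_⟩
  · filter_upwards [hg₀, hlow] with x h₀ h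
    rwa [Real.norm_eq_abs, abs_of_nonneg h₀, le_inv_mul_iff₀ hm]
  · filter_upwards [hg₀, hlow, hup] with x h₀ hl hu
    rwa [Real.norm_eq_abs, abs_of_nonneg ((mul_nonneg hm.le h₀).trans hl)]

theorem Real.rpow_le_max_mul_rpow {x y a b : ℝ} (p : ℝ) (hy : 0 < y) (ha : 0 < a)
    (hlow : a * y ≤ x) (hup : x ≤ b * y) : x ^ p ≤ max (a ^ p) (b ^ p) * y ^ p := by
  have hx : 0 < x := (mul_pos ha hy).trans_le hlow
  rcases le_total 0 p with hp | hp
  · calc x ^ p ≤ (b * y) ^ p := rpow_le_rpow hx.le hup hp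
      _ = b ^ p * y ^ p := mul_rpow (nonneg_of_mul_nonneg_left (hx.le.trans hup) hy) hy.le
      _ ≤ max (a ^ p) (b ^ p) * y ^ p := by gcongr; exact le_max_right _ _
  · calc x ^ p ≤ (a * y) ^ p := rpow_le_rpow_of_nonpos (mul_pos ha hy) hlow hp
      _ = a ^ p * y ^ p := mul_rpow ha.le hy.le
      _ ≤ max (a ^ p) (b ^ p) * y ^ p := by gcongr; exact le_max_left _ _

theorem integrableOn_rpow_iff_of_le_mul_of_le_mul {f g : α → ℝ}
    (hf : AEMeasurable f (μ.restrict s)) (hg : AEMeasurable g (μ.restrict s)) {a b : ℝ}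
    (ha : 0 < a) (hg₀ : ∀ᵐ x ∂μ.restrict s, 0 < g x) (hlow : ∀ᵐ x ∂μ.restrict s, a * g x ≤ f x)
    (hup : ∀ᵐ x ∂μ.restrict s, f x ≤ b * g x) (p : ℝ) :
    IntegrableOn (fun x => f x ^ p) s μ ↔ IntegrableOn (fun x => g x ^ p) s μ := by
  refine integrableOn_iff_of_le_mul_of_le_mul (hf.pow_const p).aestronglyMeasurable
    (hg.pow_const p).aestronglyMeasurable (m := (max (b⁻¹ ^ p) (a⁻¹ ^ p))⁻¹)
    (M := max (a ^ p) (b ^ p)) (inv_pos.2 (lt_max_of_lt_right (by positivity))) ?_ ?_ ?_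
  · filter_upwards [hg₀] with x hx using (rpow_pos_of_pos hx p).le
  · filter_upwards [hg₀, hlow, hup] with x h₀ hl hu
    have hfx : 0 < f x := (mul_pos ha h₀).trans_le hl
    have hb : 0 < b := pos_of_mul_pos_left (hfx.trans_le hu) h₀.le
    rw [inv_mul_le_iff₀ (lt_max_of_lt_right (by positivity))]
    refine Real.rpow_le_max_mul_rpow p hfx (inv_pos.2 hb) ?_ ?_
    · rwa [inv_mul_le_iff₀ hb]
    · rwa [le_inv_mul_iff₀ ha]
  · filter_upwards [hg₀, hlow, hup] with x h₀ hl hu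
    exact Real.rpow_le_max_mul_rpow p h₀ ha hl hu

end Comparison

theorem integrableOn_comp_const_sub_Ioo_iff {E : Type*} [NormedAddCommGroup E] (f : ℝ → E)
    (c a b : ℝ) :
    IntegrableOn (fun x => f (c - x)) (Ioo (c - b) (c - a)) ↔ IntegrableOn f (Ioo a b) := by
  rw [← preimage_const_sub_Ioo]
  exact (Measure.measurePreserving_sub_left volume c).integrableOn_comp_preimage
    (MeasurableEquiv.subLeft c).measurableEmbedding

theorem integrableOn_Ioo_neg_iff_of_even {E : Type*} [NormedAddCommGroup E] {f : ℝ → E}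
    (hf : ∀ x, f (-x) = f x) {c : ℝ} (hc : 0 < c) :
    IntegrableOn f (Ioo (-c) c) ↔ IntegrableOn f (Ioo 0 c) := by
  have hreflect := integrableOn_comp_const_sub_Ioo_iff f 0 (-c) 0
  simp only [zero_sub, sub_zero, neg_neg, hf] at hreflect
  rw [← Ioc_union_Ioo_eq_Ioo (neg_nonpos.2 hc.le) hc, integrableOn_union,
    integrableOn_Ioc_iff_integrableOn_Ioo, ← hreflect, and_self]

namespace Complex

theorem abs_arg_mul_im_le (z w : ℂ) : |arg z * w.im| ≤ π * |w.im| := by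
  rw [abs_mul]
  gcongr
  exact abs_arg_le_pi z

theorem norm_cpow_le_exp_mul_rpow (z w : ℂ) :
    ‖z ^ w‖ ≤ Real.exp (π * |w.im|) * ‖z‖ ^ w.re := by
  refine (norm_cpow_le z w).trans ?_
  rw [div_eq_mul_inv, ← Real.exp_neg, mul_comm]
  have harg := (neg_le_abs _).trans (abs_arg_mul_im_le z w)
  exact mul_le_mul_of_nonneg_right (Real.exp_le_exp.2 harg) (by positivity)

theorem exp_neg_mul_rpow_le_norm_cpow {z : ℂ} (hz : z ≠ 0) (w : ℂ) :
    Real.exp (-(π * |w.im|)) * ‖z‖ ^ w.re ≤ ‖z ^ w‖ := by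
  rw [norm_cpow_of_ne_zero hz, div_eq_mul_inv, ← Real.exp_neg, mul_comm (‖z‖ ^ w.re)]
  have harg := (le_abs_self _).trans (abs_arg_mul_im_le z w)
  exact mul_le_mul_of_nonneg_right (Real.exp_le_exp.2 (neg_le_neg harg)) (by positivity)

theorem one_add_exp_div_one_sub_exp (z : ℂ) :
    (1 + exp (z * I)) / (1 - exp (z * I)) = I * cot (z / 2) := by
  rw [cot_eq_exp_ratio, ← mul_div_assoc, mul_div_mul_left _ _ I_ne_zero,
    show 2 * I * (z / 2) = z * I by ring, add_comm]

end Complex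

namespace Real

@[fun_prop]
theorem measurable_cot : Measurable cot := by
  rw [show cot = fun x => cos x / sin x from funext cot_eq_cos_div_sin]
  fun_prop

theorem cot_neg (x : ℝ) : cot (-x) = -cot x := by
  simp only [cot_eq_cos_div_sin, cos_neg, sin_neg, div_neg]

theorem cot_pi_div_two_sub (x : ℝ) : cot (π / 2 - x) = (cot x)⁻¹ := by
  rw [cot_eq_cos_div_sin, cot_eq_cos_div_sin, cos_pi_div_two_sub, sin_pi_div_two_sub, inv_div]

theorem cot_ne_zero {x : ℝ} (hx : x ∈ Ioo (-(π / 2)) (π / 2)) (hx₀ : x ≠ 0) : cot x ≠ 0 := by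
  have hsin : sin x ≠ 0 := by
    rwa [Ne, sin_eq_zero_iff_of_lt_of_lt (by linarith [hx.1, pi_pos]) (by linarith [hx.2, pi_pos])]
  rw [cot_eq_cos_div_sin]
  exact div_ne_zero (cos_pos_of_mem_Ioo hx).ne' hsin

theorem cot_lt_inv {x : ℝ} (hx₀ : 0 < x) (hx : x < π / 2) : cot x < x⁻¹ := by
  rw [cot_eq_cos_div_sin, ← inv_div, ← tan_eq_sin_div_cos]
  exact inv_strictAnti₀ hx₀ (lt_tan hx₀ hx)

theorem inv_two_mul_le_cot {x : ℝ} (hx₀ : 0 < x) (hx : x ≤ π / 3) : (2 * x)⁻¹ ≤ cot x := by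
  have hcos : 1 / 2 ≤ cos x :=
    cos_pi_div_three ▸ cos_le_cos_of_nonneg_of_le_pi hx₀.le (by linarith [pi_pos]) hx
  have hsin : 0 < sin x := sin_pos_of_pos_of_lt_pi hx₀ (by linarith [pi_pos])
  rw [cot_eq_cos_div_sin, le_div_iff₀ hsin]
  calc (2 * x)⁻¹ * sin x ≤ (2 * x)⁻¹ * x := by gcongr; exact sin_le hx₀.le
    _ = 1 / 2 := by field_simp
    _ ≤ cos x := hcos

end Real

theorem integrableOn_abs_cot_half_rpow_Ioo_zero_pi_div_two (p : ℝ) :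
    IntegrableOn (fun θ => |cot (θ / 2)| ^ p) (Ioo 0 (π / 2)) ↔ p < 1 := by
  have hbounds : ∀ θ ∈ Ioo 0 (π / 2), 1 * θ⁻¹ ≤ |cot (θ / 2)| ∧ |cot (θ / 2)| ≤ 2 * θ⁻¹ := by
    rintro θ ⟨hθ₀, hθ⟩
    have hlow : θ⁻¹ ≤ cot (θ / 2) := by
      simpa only [mul_div_cancel₀ θ two_ne_zero] using
        inv_two_mul_le_cot (x := θ / 2) (by positivity) (by linarith [pi_pos])
    have hup : cot (θ / 2) < 2 * θ⁻¹ :=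
      (cot_lt_inv (by positivity) (by linarith)).trans_eq (by rw [inv_div, div_eq_mul_inv])
    rw [abs_of_pos ((inv_pos.2 hθ₀).trans_le hlow), one_mul]
    exact ⟨hlow, hup.le⟩
  rw [integrableOn_rpow_iff_of_le_mul_of_le_mul (f := fun θ => |cot (θ / 2)|)
      (g := fun θ => θ⁻¹) (b := 2) (by fun_prop) measurable_inv.aemeasurable one_pos
      (ae_restrict_of_forall_mem measurableSet_Ioo fun θ hθ => inv_pos.2 hθ.1)
      (ae_restrict_of_forall_mem measurableSet_Ioo fun θ hθ => (hbounds θ hθ).1)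
      (ae_restrict_of_forall_mem measurableSet_Ioo fun θ hθ => (hbounds θ hθ).2) p,
    integrableOn_congr_fun (fun θ hθ => by rw [inv_rpow hθ.1.le, ← rpow_neg hθ.1.le])
      measurableSet_Ioo,
    intervalIntegral.integrableOn_Ioo_rpow_iff (by positivity), neg_lt_neg_iff]

theorem integrableOn_abs_cot_half_rpow_Ioo_zero_pi (p : ℝ) :
    IntegrableOn (fun θ => |cot (θ / 2)| ^ p) (Ioo 0 π) ↔ -1 < p ∧ p < 1 := by
  have hright : IntegrableOn (fun θ => |cot (θ / 2)| ^ p) (Ioo (π / 2) π) ↔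
      IntegrableOn (fun θ => |cot (θ / 2)| ^ (-p)) (Ioo 0 (π / 2)) := by
    rw [← integrableOn_comp_const_sub_Ioo_iff, sub_self, sub_half]
    refine integrableOn_congr_fun (fun θ _ => ?_) measurableSet_Ioo
    rw [show (π - θ) / 2 = π / 2 - θ / 2 by ring, cot_pi_div_two_sub, abs_inv,
      inv_rpow (abs_nonneg _), rpow_neg (abs_nonneg _)]
  rw [← Ioc_union_Ioo_eq_Ioo (b := π / 2) (by positivity) (by linarith [pi_pos]),
    integrableOn_union, integrableOn_Ioc_iff_integrableOn_Ioo, hright,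
    integrableOn_abs_cot_half_rpow_Ioo_zero_pi_div_two,
    integrableOn_abs_cot_half_rpow_Ioo_zero_pi_div_two, neg_lt, and_comm]

/-- The boundary function `θ ↦ |((1+e^{iθ})/(1-e^{iθ}))^a|²`
(principal complex power) is Lebesgue integrable over `(-π, π)` if and only if
`|Re(a)| < 1/2`; this is the criterion for `f_a(z) = ((1+z)/(1-z))^a ∈ H²`. -/
theorem eigenfunction_in_H2_iff
    (a : ℂ) :
    IntegrableOn
      (fun θ : ℝ =>
        ‖((1 + Complex.exp (θ * Complex.I)) / (1 - Complex.exp (θ * Complex.I))) ^ a‖ ^ 2)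
      (Set.Ioo (-Real.pi) Real.pi) volume
    ↔ |a.re| < 1 / 2 := by
  have hboundary (θ : ℝ) :
      (1 + Complex.exp (θ * Complex.I)) / (1 - Complex.exp (θ * Complex.I)) =
        Complex.I * (cot (θ / 2) : ℂ) := by
    rw [Complex.one_add_exp_div_one_sub_exp, Complex.ofReal_cot, Complex.ofReal_div,
      Complex.ofReal_ofNat]
  have hsq (z : ℂ) : ‖z ^ a‖ ^ 2 = ‖z ^ (2 * a)‖ := by
    rw [← norm_pow, ← Complex.cpow_nat_mul, Nat.cast_ofNat]
  have hne : ∀ᵐ θ ∂volume.restrict (Ioo (-π) π), Complex.I * (cot (θ / 2) : ℂ) ≠ 0 := by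
    filter_upwards [ae_restrict_mem measurableSet_Ioo, ae_restrict_of_ae (volume.ae_ne 0)]
      with θ ⟨hθ₁, hθ₂⟩ hθ₀
    exact mul_ne_zero Complex.I_ne_zero (Complex.ofReal_ne_zero.2
      (cot_ne_zero ⟨by linarith, by linarith⟩ (div_ne_zero hθ₀ two_ne_zero)))
  simp only [hboundary, hsq]
  rw [integrableOn_iff_of_le_mul_of_le_mul
      (g := fun θ => ‖Complex.I * (cot (θ / 2) : ℂ)‖ ^ (2 * a).re)
      (by fun_prop : Measurable _).aestronglyMeasurable
      (by fun_prop : Measurable _).aestronglyMeasurable (Real.exp_pos (-(π * |(2 * a).im|)))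
      (ae_of_all _ fun θ => by positivity)
      (hne.mono fun θ hθ => Complex.exp_neg_mul_rpow_le_norm_cpow hθ _)
      (ae_of_all _ fun θ => Complex.norm_cpow_le_exp_mul_rpow _ _)]
  simp only [norm_mul, Complex.norm_I, Complex.norm_real, Real.norm_eq_abs, one_mul]
  rw [integrableOn_Ioo_neg_iff_of_even (fun θ => by rw [neg_div, cot_neg, abs_neg]) pi_pos,
    integrableOn_abs_cot_half_rpow_Ioo_zero_pi, abs_lt, show (2 * a).re = 2 * a.re by simp]
  constructor <;> rintro ⟨h₁, h₂⟩ <;> constructor <;> linarith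
end

section
/- Let μ > 1 be real and for each natural number n set r_n = (μⁿ − 1)/(μⁿ + 1). Then for every θ with 0 < |θ| ≤ π, the series ∑_{n=0}^{∞} (1 − r_n²)/(1 − 2 r_n cos θ + r_n²) converges and ∑_{n=0}^{∞} (1 − r_n²)/(1 − 2 r_n cos θ + r_n²) ≤ (16μ/(μ−1)) · (π/|θ|). That is, the sum of the Poisson kernels at the orbit points φ_μ^{∘n}(0) = r_n is at most (16μ/(μ−1))·π/|θ|. -/
/-! Writing `t = μⁿ`, the orbit point is `rₙ = (t - 1)/(t + 1)` and the Poisson kernel there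
collapses to `2t / ((1 + cos θ) + t²(1 - cos θ))`. This is at most `t`, and, since
`1 - cos θ ≥ 2θ²/π²`, at most `A²/t` with `A = π/|θ|`. Summing `min (μⁿ) (A²/μⁿ)` splits at the
`n` with `μⁿ ≈ A` into two geometric series, each at most `μA/(μ - 1)`. -/

open Real Finset

noncomputable section

/-- `P_ρ(e^{iθ})`, i.e. Mathlib's `poissonKernel 0 ρ (exp (θ * I))` written in real coordinates. -/
def diskPoissonKernel (ρ θ : ℝ) : ℝ :=
  (1 - ρ ^ 2) / (1 - 2 * ρ * cos θ + ρ ^ 2)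

section Cayley

variable {t : ℝ} (θ : ℝ)

theorem one_add_cos_add_sq_mul_one_sub_cos_pos (ht : t ≠ 0) :
    0 < (1 + cos θ) + t ^ 2 * (1 - cos θ) := by
  have hc₀ : 0 ≤ 1 + cos θ := by linarith [neg_one_le_cos θ]
  rcases (sub_nonneg.2 (cos_le_one θ)).eq_or_lt with h | h
  · rw [← h]; linarith
  · positivity

theorem diskPoissonKernel_cayley_eq (ht : 0 < t) :
    diskPoissonKernel ((t - 1) / (t + 1)) θ = 2 * t / ((1 + cos θ) + t ^ 2 * (1 - cos θ)) := by
  have hD := one_add_cos_add_sq_mul_one_sub_cos_pos θ ht.ne'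
  have ht₁ : t + 1 ≠ 0 := by positivity
  have hnum : 1 - ((t - 1) / (t + 1)) ^ 2 = 4 * t / (t + 1) ^ 2 := by
    field_simp; ring
  have hden : 1 - 2 * ((t - 1) / (t + 1)) * cos θ + ((t - 1) / (t + 1)) ^ 2
      = 2 * ((1 + cos θ) + t ^ 2 * (1 - cos θ)) / (t + 1) ^ 2 := by
    field_simp; ring
  rw [diskPoissonKernel, hnum, hden, div_div_div_cancel_right₀ (by positivity)]
  field_simp
  ring

theorem diskPoissonKernel_cayley_nonneg (ht : 0 < t) :
    0 ≤ diskPoissonKernel ((t - 1) / (t + 1)) θ := by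
  rw [diskPoissonKernel_cayley_eq θ ht]
  have := neg_one_le_cos θ
  have := cos_le_one θ
  exact div_nonneg (by positivity) (by nlinarith [sq_nonneg t])

theorem diskPoissonKernel_cayley_le_self (ht : 1 ≤ t) :
    diskPoissonKernel ((t - 1) / (t + 1)) θ ≤ t := by
  have ht₀ : 0 < t := by linarith
  rw [diskPoissonKernel_cayley_eq θ ht₀,
    div_le_iff₀ (one_add_cos_add_sq_mul_one_sub_cos_pos θ ht₀.ne')]
  nlinarith [mul_nonneg (sub_nonneg.2 (cos_le_one θ)) (by nlinarith : (0 : ℝ) ≤ t ^ 2 - 1)]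

theorem diskPoissonKernel_cayley_le_div (ht : 0 < t) (hθ : cos θ < 1) :
    diskPoissonKernel ((t - 1) / (t + 1)) θ ≤ 2 / (t * (1 - cos θ)) := by
  rw [diskPoissonKernel_cayley_eq θ ht,
    div_le_div_iff₀ (one_add_cos_add_sq_mul_one_sub_cos_pos θ ht.ne') (by nlinarith)]
  nlinarith [neg_one_le_cos θ]

theorem diskPoissonKernel_cayley_le_min {θ : ℝ} (ht : 1 ≤ t) (hθ₀ : θ ≠ 0) (hθπ : |θ| ≤ π) :
    diskPoissonKernel ((t - 1) / (t + 1)) θ ≤ min t ((π / |θ|) ^ 2 / t) := by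
  have ht₀ : 0 < t := by linarith
  have hθ₂ : 0 < 2 / π ^ 2 * θ ^ 2 := by positivity
  have hcos : 2 / π ^ 2 * θ ^ 2 ≤ 1 - cos θ := by linarith [cos_le_one_sub_mul_cos_sq hθπ]
  refine le_min (diskPoissonKernel_cayley_le_self θ ht) ?_
  calc diskPoissonKernel ((t - 1) / (t + 1)) θ ≤ 2 / (t * (1 - cos θ)) :=
        diskPoissonKernel_cayley_le_div θ ht₀ (by linarith)
    _ ≤ 2 / (t * (2 / π ^ 2 * θ ^ 2)) := by gcongr
    _ = (π / |θ|) ^ 2 / t := by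
        rw [div_pow, sq_abs]
        field_simp

end Cayley

section Geometric

variable {μ : ℝ} (hμ : 1 < μ)
include hμ

theorem summable_min_pow_sq_div_pow (A : ℝ) :
    Summable fun n : ℕ => min (μ ^ n) (A ^ 2 / μ ^ n) := by
  have hμ₀ : 0 < μ := by linarith
  refine Summable.of_nonneg_of_le (fun n => le_min (by positivity) (by positivity))
    (fun n => (min_le_right _ _).trans_eq (by rw [inv_pow, div_eq_mul_inv]))
    ((summable_geometric_of_lt_one (by positivity) (inv_lt_one_of_one_lt₀ hμ)).mul_left (A ^ 2))

theorem tsum_min_pow_sq_div_pow_le {A : ℝ} (hA : 1 ≤ A) :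
    ∑' n : ℕ, min (μ ^ n) (A ^ 2 / μ ^ n) ≤ 2 * μ / (μ - 1) * A := by
  have hμ₀ : 0 < μ := by linarith
  have hμ₁ : 0 < μ - 1 := by linarith
  obtain ⟨N, hN, hN₁⟩ := exists_nat_pow_near hA hμ
  rw [← (summable_min_pow_sq_div_pow hμ A).sum_add_tsum_nat_add (N + 1)]
  have head : ∑ n ∈ range (N + 1), min (μ ^ n) (A ^ 2 / μ ^ n) ≤ μ * A / (μ - 1) :=
    calc ∑ n ∈ range (N + 1), min (μ ^ n) (A ^ 2 / μ ^ n) ≤ ∑ n ∈ range (N + 1), μ ^ n :=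
          sum_le_sum fun n _ => min_le_left _ _
      _ = (μ ^ (N + 1) - 1) / (μ - 1) := geom_sum_eq hμ.ne' _
      _ ≤ μ * A / (μ - 1) := by
          gcongr
          rw [pow_succ]
          nlinarith
  have tail : ∑' n : ℕ, min (μ ^ (n + (N + 1))) (A ^ 2 / μ ^ (n + (N + 1))) ≤ μ * A / (μ - 1) :=
    calc ∑' n : ℕ, min (μ ^ (n + (N + 1))) (A ^ 2 / μ ^ (n + (N + 1)))
          ≤ ∑' n : ℕ, A ^ 2 / μ ^ (N + 1) * μ⁻¹ ^ n := by
          refine Summable.tsum_le_tsum (fun n => (min_le_right _ _).trans_eq ?_)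
            ((summable_nat_add_iff (f := fun n : ℕ => min (μ ^ n) (A ^ 2 / μ ^ n)) (N + 1)).2
              (summable_min_pow_sq_div_pow hμ A))
            ((summable_geometric_of_lt_one (by positivity) (inv_lt_one_of_one_lt₀ hμ)).mul_left _)
          rw [pow_add, inv_pow]
          field_simp
      _ = A ^ 2 / μ ^ (N + 1) * (μ / (μ - 1)) := by
          rw [tsum_mul_left, tsum_geometric_of_lt_one (by positivity) (inv_lt_one_of_one_lt₀ hμ)]
          field_simp
      _ ≤ μ * A / (μ - 1) := by
          rw [div_mul_div_comm, div_le_div_iff₀ (by positivity) hμ₁]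
          have : 0 < A := by linarith
          nlinarith [mul_lt_mul_of_pos_left hN₁ (mul_pos hμ₀ this)]
  linarith [show 2 * μ / (μ - 1) * A = μ * A / (μ - 1) + μ * A / (μ - 1) by ring]

end Geometric

end

/-- For `μ > 1`, `r_n = (μⁿ-1)/(μⁿ+1)`, and `0 < |θ| ≤ π`, the sum of
the Poisson kernels at the orbit points `r_n = φ_μ^[n](0)` converges and satisfies
`∑_{n≥0} P_{r_n}(e^{iθ}) ≤ (16μ/(μ-1)) · (π/|θ|)`. -/
theorem poisson_kernel_orbit_sum_estimate
    (μ : ℝ) (hμ : 1 < μ) (r : ℕ → ℝ) (hr : ∀ n : ℕ, r n = (μ ^ n - 1) / (μ ^ n + 1))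
    (θ : ℝ) (hθ0 : 0 < |θ|) (hθπ : |θ| ≤ Real.pi) :
    Summable (fun n : ℕ => (1 - r n ^ 2) / (1 - 2 * r n * Real.cos θ + r n ^ 2)) ∧
    (∑' n : ℕ, (1 - r n ^ 2) / (1 - 2 * r n * Real.cos θ + r n ^ 2))
      ≤ (16 * μ / (μ - 1)) * (Real.pi / |θ|) := by
  show Summable (fun n => diskPoissonKernel (r n) θ) ∧ ∑' n, diskPoissonKernel (r n) θ ≤ _
  have hnonneg (n : ℕ) : 0 ≤ diskPoissonKernel (r n) θ :=
    hr n ▸ diskPoissonKernel_cayley_nonneg θ (pow_pos (by linarith) n)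
  have hbound (n : ℕ) : diskPoissonKernel (r n) θ ≤ min (μ ^ n) ((π / |θ|) ^ 2 / μ ^ n) :=
    hr n ▸ diskPoissonKernel_cayley_le_min (one_le_pow₀ hμ.le) (abs_pos.1 hθ0) hθπ
  have hsum := (summable_min_pow_sq_div_pow hμ _).of_nonneg_of_le hnonneg hbound
  refine ⟨hsum, ?_⟩
  have hμ₁ : 0 < μ - 1 := by linarith
  calc ∑' n, diskPoissonKernel (r n) θ ≤ ∑' n : ℕ, min (μ ^ n) ((π / |θ|) ^ 2 / μ ^ n) :=
        hsum.tsum_le_tsum hbound (summable_min_pow_sq_div_pow hμ _)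
    _ ≤ 2 * μ / (μ - 1) * (π / |θ|) :=
        tsum_min_pow_sq_div_pow_le hμ ((one_le_div hθ0).2 hθπ)
    _ ≤ 16 * μ / (μ - 1) * (π / |θ|) := by
        have : 0 < μ := by linarith
        gcongr
        norm_num
end
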